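/- For all p, q ∈ [0,1] and B ≥ 0: if kl(q‖p) ≤ B then p ≤ q + B + √(B·(B + 2q)). -/

import Mathlib

open Set
open scoped ENNReal NNReal

-- Binary Kullback–Leibler divergence `kl(q‖p)`, valued in `ℝ≥0∞`:
-- `q·log(q/p) + (1−q)·log((1−q)/(1−p))` with the conventions `0·log 0 = 0` and
-- `kl(q‖p) = ∞` when `Bernoulli(q)` is not absolutely continuous w.r.t. `Bernoulli(p)`.
open Classical in
noncomputable def klBin (q p : ℝ) : ℝ≥0∞ :=
  if (p = 0 → q = 0) ∧ (p = 1 → q = 1)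
  then ENNReal.ofReal (q * Real.log (q / p) + (1 - q) * Real.log ((1 - q) / (1 - p)))
  else ⊤

/-!
For `q ≤ p`, the two terms of `kl(q‖p)` are bounded below separately: `q log(q/p) ≥ (q² - p²)/(2p)`
by `log t ≤ sinh (log t) = (t - t⁻¹)/2` at `t = p/q ≥ 1`, and `(1-q) log((1-q)/(1-p)) ≥ p - q` by
`log x ≥ 1 - x⁻¹`. Adding them gives `kl(q‖p) ≥ (p - q)²/(2p)`, so `kl(q‖p) ≤ B` forces
`(p - q)² ≤ 2pB`, i.e. `(p - q - B)² ≤ B(B + 2q)`.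
-/

open Real

lemma Real.log_le_half_sub_inv {t : ℝ} (ht : 1 ≤ t) : log t ≤ (t - t⁻¹) / 2 := by
  rw [← sinh_log (by positivity)]
  exact self_le_sinh_iff.mpr (log_nonneg ht)

lemma Real.sq_sub_sq_div_le_mul_log_div {p q : ℝ} (hq : 0 ≤ q) (hqp : q ≤ p) :
    (q ^ 2 - p ^ 2) / (2 * p) ≤ q * log (q / p) := by
  rcases hq.eq_or_lt with rfl | hq
  · simp only [zero_mul]
    exact div_nonpos_of_nonpos_of_nonneg (by nlinarith) (by linarith)
  have hp : 0 < p := hq.trans_le hqp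
  calc (q ^ 2 - p ^ 2) / (2 * p) = -q * ((p / q - (p / q)⁻¹) / 2) := by
        field_simp
        ring
    _ ≤ -q * log (p / q) :=
        mul_le_mul_of_nonpos_left (log_le_half_sub_inv ((one_le_div hq).mpr hqp)) (by linarith)
    _ = q * log (q / p) := by rw [← inv_div, log_inv]; ring

lemma Real.sub_le_mul_log_div {a b : ℝ} (ha : 0 ≤ a) (hb : 0 < b) : a - b ≤ a * log (a / b) := by
  rcases ha.eq_or_lt with rfl | ha
  · simpa using hb.le
  calc a - b = a * (1 - (a / b)⁻¹) := by field_simp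
    _ ≤ a * log (a / b) := by gcongr; exact one_sub_inv_le_log_of_pos (by positivity)

lemma sq_sub_div_le_binaryKL {p q : ℝ} (hq : 0 ≤ q) (hqp : q ≤ p) (hp : p < 1) :
    (p - q) ^ 2 / (2 * p) ≤ q * log (q / p) + (1 - q) * log ((1 - q) / (1 - p)) := by
  have hsplit : (p - q) ^ 2 / (2 * p) = (q ^ 2 - p ^ 2) / (2 * p) + ((1 - q) - (1 - p)) := by
    rcases (hq.trans hqp).eq_or_lt with rfl | hp0
    · simp [le_antisymm hqp hq]
    · field_simp
      ring
  rw [hsplit]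
  exact add_le_add (sq_sub_sq_div_le_mul_log_div hq hqp) (sub_le_mul_log_div (by linarith) (by linarith))

lemma ofReal_sq_sub_div_le_klBin {p q : ℝ} (hq : 0 ≤ q) (hqp : q ≤ p) (hp : p ≤ 1) :
    ENNReal.ofReal ((p - q) ^ 2 / (2 * p)) ≤ klBin q p := by
  unfold klBin
  split_ifs with hac
  · rcases hp.lt_or_eq with hp | rfl
    · exact ENNReal.ofReal_le_ofReal (sq_sub_div_le_binaryKL hq hqp hp)
    · simp [hac.2 rfl]
  · exact le_top

lemma le_add_add_sqrt_of_sq_sub_le {p q B : ℝ} (h : (p - q) ^ 2 ≤ 2 * p * B) :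
    p ≤ q + B + √(B * (B + 2 * q)) := by
  have hsq : (p - (q + B)) ^ 2 ≤ B * (B + 2 * q) := by nlinarith
  linarith [Real.le_sqrt_of_sq_le hsq]

theorem binary_kl_inverse_moment_bound
    (p q B : ℝ) (hp : p ∈ Icc (0 : ℝ) 1) (hq : q ∈ Icc (0 : ℝ) 1) (hB : 0 ≤ B)
    (h : klBin q p ≤ ENNReal.ofReal B) :
    p ≤ q + B + Real.sqrt (B * (B + 2 * q)) := by
  by_cases hpq : p ≤ q
  · linarith [Real.sqrt_nonneg (B * (B + 2 * q))]
  push Not at hpq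
  have hkl := (ofReal_sq_sub_div_le_klBin hq.1 hpq.le hp.2).trans h
  rw [ENNReal.ofReal_le_ofReal_iff hB, div_le_iff₀ (by linarith [hq.1])] at hkl
  exact le_add_add_sqrt_of_sq_sub_le (by linarith)
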